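/- Let Φ, Ψ, h, g and V_g be as in the canonical construction. Then V_g is closed under forward chaining in Φ (F_Φ(V_g) = V_g), the set X(V_g) := {C ∈ I(h) : Vars(C) ⊆ V_g} is an exclusive set of clauses of h, and g is the X(V_g)-component of h: for every set of clauses C ⊆ I(h) whose conjunction represents h, the conjunction of the clauses in C ∩ X(V_g) represents g. -/

import Mathlib

open Finset

/-- A clause, given by its (fin)sets of positive and negative variables. -/
structure Clause (V : Type*) where
  pos : Finset V
  neg : Finset V
deriving DecidableEq

namespace Clause

variable {V : Type*}

/-- A genuine clause: no variable occurs both positively and negatively. -/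
def IsClause (C : Clause V) : Prop := Disjoint C.pos C.neg

/-- Evaluation of a clause (as a disjunction of literals) under an assignment. -/
def eval (C : Clause V) (a : V → Bool) : Prop :=
  (∃ v ∈ C.pos, a v = true) ∨ (∃ v ∈ C.neg, a v = false)

/-- A pure (definite) Horn clause: exactly one positive literal, its head. -/
def IsPureHorn (C : Clause V) : Prop := ∃ v, C.pos = {v}

end Clause

variable {V : Type*}

/-- Conjunction (as a predicate on assignments) of a set of clauses. -/
def evalSet (S : Set (Clause V)) (a : V → Bool) : Prop := ∀ C ∈ S, C.eval a

/-- Conjunction of the clauses of a CNF, i.e. of a finite set of clauses. -/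
def evalCNF (Φ : Finset (Clause V)) (a : V → Bool) : Prop := ∀ C ∈ Φ, C.eval a

/-- A CNF represents a Boolean function `h`. -/
def Represents (Φ : Finset (Clause V)) (h : (V → Bool) → Prop) : Prop :=
  ∀ a, evalCNF Φ a ↔ h a

/-- A pure Horn CNF: all clauses are pure Horn. -/
def IsPureHornCNF (Φ : Finset (Clause V)) : Prop :=
  ∀ C ∈ Φ, C.IsClause ∧ C.IsPureHorn

/-- The forward chaining closure of a set `Q` of variables with respect to the
pure Horn CNF `Φ`: the smallest set containing `Q` such that whenever `Φ` contains
a clause `S → v` with `S` inside the set, also `v` belongs to it. -/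
def fcClosure (Φ : Finset (Clause V)) (Q : Set V) : Set V :=
  ⋂₀ {T : Set V | Q ⊆ T ∧ ∀ C ∈ Φ, ∀ v : V, C.pos = {v} → ↑C.neg ⊆ T → v ∈ T}

/-- `C` is an implicate of `h`: every assignment falsifying `C` falsifies `h`. -/
def Implicate (h : (V → Bool) → Prop) (C : Clause V) : Prop :=
  ∀ a, ¬ C.eval a → ¬ h a

/-- `C` is a prime implicate of `h`: an implicate from which no literal can be
deleted while remaining an implicate. -/
def PrimeImplicate [DecidableEq V] (h : (V → Bool) → Prop) (C : Clause V) : Prop :=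
  C.IsClause ∧ Implicate h C ∧
  (∀ v ∈ C.pos, ¬ Implicate h ⟨C.pos.erase v, C.neg⟩) ∧
  (∀ v ∈ C.neg, ¬ Implicate h ⟨C.pos, C.neg.erase v⟩)

/-- `C₁` and `C₂` are resolvable on `v`: `v` occurs positively in `C₁`, negatively in
`C₂`, and no other variable occurs with opposite signs in them. -/
def Resolvable (C₁ C₂ : Clause V) (v : V) : Prop :=
  v ∈ C₁.pos ∧ v ∈ C₂.neg ∧
  ∀ w, w ≠ v → ¬(w ∈ C₁.pos ∧ w ∈ C₂.neg) ∧ ¬(w ∈ C₁.neg ∧ w ∈ C₂.pos)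

/-- The resolvent `R(C₁,C₂) = (C₁ \ {v}) ∪ (C₂ \ {v̄})`. -/
def resolventOf [DecidableEq V] (C₁ C₂ : Clause V) (v : V) : Clause V :=
  ⟨C₁.pos.erase v ∪ C₂.pos, C₁.neg ∪ C₂.neg.erase v⟩

/-- A set of clauses closed under resolution. -/
def ResClosed [DecidableEq V] (S : Set (Clause V)) : Prop :=
  ∀ C₁ ∈ S, ∀ C₂ ∈ S, ∀ v, Resolvable C₁ C₂ v → resolventOf C₁ C₂ v ∈ S

/-- The resolution closure of a set of clauses. -/
def resClosure [DecidableEq V] (S : Set (Clause V)) : Set (Clause V) :=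
  ⋂₀ {T : Set (Clause V) | S ⊆ T ∧ ResClosed T}

/-- `I(h)`: the resolution closure of the set of prime implicates of `h`. -/
def implSet [DecidableEq V] (h : (V → Bool) → Prop) : Set (Clause V) :=
  resClosure {C | PrimeImplicate h C}

/-- An exclusive set of clauses of `h`. -/
def ExclusiveSet [DecidableEq V] (h : (V → Bool) → Prop) (Xs : Set (Clause V)) : Prop :=
  Xs ⊆ implSet h ∧
  ∀ C₁ ∈ implSet h, ∀ C₂ ∈ implSet h, ∀ v, Resolvable C₁ C₂ v →
    resolventOf C₁ C₂ v ∈ Xs → C₁ ∈ Xs ∧ C₂ ∈ Xs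

/-- The set of variables occurring in a CNF. -/
def varsOf [DecidableEq V] (Φ : Finset (Clause V)) : Finset V :=
  Φ.biUnion fun C => C.pos ∪ C.neg


/-- A Label Cover instance: a bipartite graph with parts `X` and `Y` and edge set `E`,
label sets `A` (for `X`-vertices) and `B` (for `Y`-vertices), and a nonempty
constraint relation `cst e ⊆ A × B` for every edge `e ∈ E`. -/
structure LabelCover (X Y A B : Type*) where
  E : Finset (X × Y)
  cst : X × Y → Finset (A × B)
  cst_nonempty : ∀ e ∈ E, (cst e).Nonempty

namespace LabelCover

variable {X Y A B : Type*}

/-- A labeling `(f, g)` covers an edge `(x,y)` if for every label `b ∈ g y` there is a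
label `a ∈ f x` with `(a, b)` admissible for the edge. -/
def Covers (I : LabelCover X Y A B) (f : X → Finset A) (g : Y → Finset B)
    (e : X × Y) : Prop :=
  ∀ b ∈ g e.2, ∃ a ∈ f e.1, (a, b) ∈ I.cst e

/-- A total-cover: a labeling (assigning a nonempty label set to every `Y`-vertex)
covering every edge. -/
def IsTotalCover (I : LabelCover X Y A B) (f : X → Finset A) (g : Y → Finset B) : Prop :=
  (∀ y, (g y).Nonempty) ∧ ∀ e ∈ I.E, I.Covers f g e

/-- A total-cover is tight if every `Y`-vertex receives exactly one label. -/
def Tight (g : Y → Finset B) : Prop := ∀ y, (g y).card = 1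

end LabelCover

/-- The cost of a labeling: the average number of labels assigned to `X`-vertices. -/
def lcCost {X A : Type*} [Fintype X] (f : X → Finset A) : ℚ :=
  (∑ x, ((f x).card : ℚ)) / (Fintype.card X : ℚ)


/-- The labels of the refined Label Cover instance: `L ∪ L′`, where `L = ⋃_x L_x`
with `L_x = {x} × A` and `L′ = ⋃_y L′_y` with `L′_y = {y} × B`. -/
abbrev Lab (X Y A B : Type*) := (X × A) ⊕ (Y × B)

/-- The propositional variables of the canonical pure Horn CNF construction:
`u ℓ` for labels `ℓ ∈ L ∪ L′`, `e x y i` and `el x y ℓ′ i` for edges `(x,y)`,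
labels `ℓ′ ∈ L′_y` and indices `i ∈ [d]`, and `v j` for `j ∈ [t]`. -/
inductive PV (X Y A B : Type*) where
  | u : Lab X Y A B → PV X Y A B
  | e : X → Y → ℕ → PV X Y A B
  | el : X → Y → B → ℕ → PV X Y A B
  | v : ℕ → PV X Y A B
deriving DecidableEq

section Canonical

variable {X Y A B : Type*} [Fintype X] [Fintype Y] [Fintype A] [Fintype B]
  [DecidableEq X] [DecidableEq Y] [DecidableEq A] [DecidableEq B]

/-- The (open) neighborhood `N(y) = {z ∈ X : (z,y) ∈ E}`. -/
def Nbr (I : LabelCover X Y A B) (y : Y) : Finset X :=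
  Finset.univ.filter fun z => (z, y) ∈ I.E

/-- Clauses (a): `u(ℓ) ∧ u(ℓ′) → e(x,y,ℓ′,i)` for `(x,y) ∈ E`, `(ℓ,ℓ′) ∈ Π_{(x,y)}`,
`i ∈ [d]`. -/
def clA (I : LabelCover X Y A B) (d : ℕ) : Finset (Clause (PV X Y A B)) :=
  (I.E ×ˢ Finset.Icc 1 d).biUnion fun p =>
    (I.cst p.1).image fun ab =>
      ⟨{PV.el p.1.1 p.1.2 ab.2 p.2},
       {PV.u (Sum.inl (p.1.1, ab.1)), PV.u (Sum.inr (p.1.2, ab.2))}⟩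

/-- Clauses (b): `⋀_{z ∈ N(y)} e(z,y,ℓ′,i) → e(x,y,i)` for `(x,y) ∈ E`, `ℓ′ ∈ L′_y`,
`i ∈ [d]`. -/
def clB (I : LabelCover X Y A B) (d : ℕ) : Finset (Clause (PV X Y A B)) :=
  ((I.E ×ˢ (Finset.univ : Finset B)) ×ˢ Finset.Icc 1 d).image fun p =>
    ⟨{PV.e p.1.1.1 p.1.1.2 p.2},
     (Nbr I p.1.1.2).image fun z => PV.el z p.1.1.2 p.1.2 p.2⟩

/-- Clauses (c): `e(x,y,i) → e(x,y,ℓ′,i)` for `(x,y) ∈ E`, `ℓ′ ∈ L′_y`, `i ∈ [d]`. -/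
def clC (I : LabelCover X Y A B) (d : ℕ) : Finset (Clause (PV X Y A B)) :=
  ((I.E ×ˢ (Finset.univ : Finset B)) ×ˢ Finset.Icc 1 d).image fun p =>
    ⟨{PV.el p.1.1.1 p.1.1.2 p.1.2 p.2}, {PV.e p.1.1.1 p.1.1.2 p.2}⟩

/-- The common body of the clauses (d): all variables `e(x,y,i)`, `(x,y) ∈ E`, `i ∈ [d]`. -/
def bigBody (I : LabelCover X Y A B) (d : ℕ) : Finset (PV X Y A B) :=
  (I.E ×ˢ Finset.Icc 1 d).image fun p => PV.e p.1.1 p.1.2 p.2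

/-- Clauses (d): `⋀_{i ∈ [d]} ⋀_{(x,y) ∈ E} e(x,y,i) → u(ℓ)` for `ℓ ∈ L ∪ L′`. -/
def clD (I : LabelCover X Y A B) (d : ℕ) : Finset (Clause (PV X Y A B)) :=
  (Finset.univ : Finset (Lab X Y A B)).image fun ℓ => ⟨{PV.u ℓ}, bigBody I d⟩

/-- Clauses (e): `v(j) → u(ℓ)` for `j ∈ [t]`, `ℓ ∈ L ∪ L′`. -/
def clE (X Y A B : Type*) [Fintype X] [Fintype Y] [Fintype A] [Fintype B]
    [DecidableEq X] [DecidableEq Y] [DecidableEq A] [DecidableEq B]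
    (t : ℕ) : Finset (Clause (PV X Y A B)) :=
  (Finset.Icc 1 t ×ˢ (Finset.univ : Finset (Lab X Y A B))).image fun p =>
    ⟨{PV.u p.2}, {PV.v p.1}⟩

/-- The canonical formula `Ψ`: clauses of types (a)–(d). -/
def PsiCNF (I : LabelCover X Y A B) (d : ℕ) : Finset (Clause (PV X Y A B)) :=
  clA I d ∪ clB I d ∪ clC I d ∪ clD I d

/-- The canonical formula `Φ`: clauses of types (a)–(e). -/
def PhiCNF (I : LabelCover X Y A B) (d t : ℕ) : Finset (Clause (PV X Y A B)) :=
  PsiCNF I d ∪ clE X Y A B t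

/-- The pure Horn function `h` represented by the canonical formula `Φ`. -/
def hFun (I : LabelCover X Y A B) (d t : ℕ) : (PV X Y A B → Bool) → Prop :=
  fun a => evalCNF (PhiCNF I d t) a

/-- The pure Horn function `g` represented by the canonical formula `Ψ`. -/
def gFun (I : LabelCover X Y A B) (d : ℕ) : (PV X Y A B → Bool) → Prop :=
  fun a => evalCNF (PsiCNF I d) a

end Canonical

/-!
The canonical formula `Φ` is `Ψ` extended by the clauses (e), whose heads `u(ℓ)` already occur
in `Ψ` and whose bodies `v(j)` do not. Hence no variable outside `V_g` occurs positively in `Φ`,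
so setting such a variable to false preserves `h`; consequently no clause of `I(h)` contains
such a variable positively. This gives exclusivity at once, since a resolution step only
removes a variable that is positive in the first parent. For the component, zero out an
assignment outside `V_g`: the zeroed assignment satisfies the clauses (e), and every clause of
`I(h)` not inside `V_g` has a negative literal outside `V_g`, which it then satisfies.
-/

section General

lemma fcClosure_eq_self {Φ : Finset (Clause V)} {Q : Set V}
    (hQ : ∀ C ∈ Φ, ∀ v, C.pos = {v} → ↑C.neg ⊆ Q → v ∈ Q) : fcClosure Φ Q = Q :=
  Set.Subset.antisymm (Set.sInter_subset_of_mem ⟨subset_rfl, hQ⟩)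
    (Set.subset_sInter fun _ hT => hT.1)

variable [DecidableEq V]

lemma Clause.eval_congr (C : Clause V) {a a' : V → Bool}
    (h : ∀ w ∈ C.pos ∪ C.neg, a w = a' w) : C.eval a ↔ C.eval a' := by
  unfold Clause.eval
  refine or_congr (exists_congr fun w => and_congr_right fun hw => ?_)
    (exists_congr fun w => and_congr_right fun hw => ?_)
  · rw [h w (mem_union_left _ hw)]
  · rw [h w (mem_union_right _ hw)]

lemma mem_varsOf {Φ : Finset (Clause V)} {C : Clause V} (hC : C ∈ Φ) {w : V}
    (hw : w ∈ C.pos ∪ C.neg) : w ∈ varsOf Φ :=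
  mem_biUnion.2 ⟨C, hC, hw⟩

lemma evalCNF_congr (Φ : Finset (Clause V)) {a a' : V → Bool}
    (h : ∀ w ∈ varsOf Φ, a w = a' w) : evalCNF Φ a ↔ evalCNF Φ a' :=
  forall₂_congr fun C hC => C.eval_congr fun w hw => h w (mem_varsOf hC hw)

lemma evalCNF_update_false {Φ : Finset (Clause V)} {w : V} (hw : ∀ C ∈ Φ, w ∉ C.pos)
    {a : V → Bool} (ha : evalCNF Φ a) : evalCNF Φ (Function.update a w false) := by
  intro C hC
  rcases ha C hC with ⟨u, hu, hau⟩ | ⟨u, hu, hau⟩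
  · have huw : u ≠ w := fun h => hw C hC (h ▸ hu)
    exact Or.inl ⟨u, hu, by rwa [Function.update_of_ne huw]⟩
  · refine Or.inr ⟨u, hu, ?_⟩
    by_cases huw : u = w
    · rw [huw, Function.update_self]
    · rwa [Function.update_of_ne huw]

lemma PrimeImplicate.notMem_pos {h : (V → Bool) → Prop} {C : Clause V} {w : V}
    (hw : ∀ a, h a → h (Function.update a w false)) (hC : PrimeImplicate h C) :
    w ∉ C.pos := by
  obtain ⟨hdisj, himp, hpos_min, -⟩ := hC
  intro hwC
  refine hpos_min w hwC fun a ha hha => himp _ ?_ (hw a hha)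
  rintro (⟨u, hu, hau⟩ | ⟨u, hu, hau⟩)
  · by_cases huw : u = w
    · simp [huw] at hau
    · rw [Function.update_of_ne huw] at hau
      exact ha (Or.inl ⟨u, mem_erase.2 ⟨huw, hu⟩, hau⟩)
  · have huw : u ≠ w := fun h => disjoint_left.1 hdisj hwC (h ▸ hu)
    rw [Function.update_of_ne huw] at hau
    exact ha (Or.inr ⟨u, hu, hau⟩)

lemma implSet_subset {h : (V → Bool) → Prop} {T : Set (Clause V)}
    (hprime : {C | PrimeImplicate h C} ⊆ T) (hT : ResClosed T) : implSet h ⊆ T :=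
  Set.sInter_subset_of_mem ⟨hprime, hT⟩

lemma pos_subset_of_mem_implSet {h : (V → Bool) → Prop} {S : Set V}
    (hS : ∀ w ∉ S, ∀ a, h a → h (Function.update a w false)) {C : Clause V}
    (hC : C ∈ implSet h) : ↑C.pos ⊆ S := by
  refine implSet_subset (T := {C | ↑C.pos ⊆ S}) ?_ ?_ hC
  · intro C hC w hw
    by_contra hwS
    exact hC.notMem_pos (hS w hwS) hw
  · intro C₁ h₁ C₂ h₂ v _
    simp only [resolventOf, Set.mem_ofPred_eq, coe_union]
    exact Set.union_subset ((coe_erase v _ ▸ Set.sdiff_subset).trans h₁) h₂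

lemma vars_union_subset_insert_vars_resolventOf (C₁ C₂ : Clause V) (v : V) :
    C₁.pos ∪ C₁.neg ∪ (C₂.pos ∪ C₂.neg) ⊆
      insert v ((resolventOf C₁ C₂ v).pos ∪ (resolventOf C₁ C₂ v).neg) := by
  intro w
  simp only [resolventOf, mem_union, mem_insert, mem_erase]
  tauto

lemma exclusiveSet_of_pos_subset {h : (V → Bool) → Prop} {S : Set V}
    (hpos : ∀ C ∈ implSet h, ↑C.pos ⊆ S) :
    ExclusiveSet h {C ∈ implSet h | ↑(C.pos ∪ C.neg) ⊆ S} := by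
  refine ⟨fun C hC => hC.1, fun C₁ h₁ C₂ h₂ v hres hR => ?_⟩
  have hv : v ∈ S := hpos C₁ h₁ hres.1
  have hparents : ↑(C₁.pos ∪ C₁.neg ∪ (C₂.pos ∪ C₂.neg)) ⊆ S := by
    refine (coe_subset.2 (vars_union_subset_insert_vars_resolventOf C₁ C₂ v)).trans ?_
    rw [coe_insert]
    exact Set.insert_subset hv hR.2
  rw [coe_union] at hparents
  exact ⟨⟨h₁, (Set.union_subset_iff.1 hparents).1⟩, ⟨h₂, (Set.union_subset_iff.1 hparents).2⟩⟩

def zeroOutside (S : Finset V) (a : V → Bool) : V → Bool :=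
  fun w => if w ∈ S then a w else false

lemma Clause.eval_zeroOutside_iff {S : Finset V} {C : Clause V} (hC : C.pos ∪ C.neg ⊆ S)
    (a : V → Bool) : C.eval (zeroOutside S a) ↔ C.eval a :=
  C.eval_congr fun _ hw => if_pos (hC hw)

lemma Clause.eval_zeroOutside_of_not_subset {S : Finset V} {C : Clause V} (hpos : C.pos ⊆ S)
    (hC : ¬ C.pos ∪ C.neg ⊆ S) (a : V → Bool) : C.eval (zeroOutside S a) := by
  obtain ⟨w, hw, hwS⟩ := not_subset.1 hC
  have hwneg : w ∈ C.neg := (mem_union.1 hw).resolve_left fun h => hwS (hpos h)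
  exact Or.inr ⟨w, hwneg, if_neg hwS⟩

end General

section UnionCNF

variable [DecidableEq V] {Ψ E : Finset (Clause V)}

lemma fcClosure_union_varsOf (hbody : ∀ C ∈ E, ∃ w ∈ C.neg, w ∉ varsOf Ψ) :
    fcClosure (Ψ ∪ E) ↑(varsOf Ψ) = ↑(varsOf Ψ) := by
  refine fcClosure_eq_self fun C hC v hv hneg => ?_
  rcases mem_union.1 hC with hC | hC
  · exact mem_varsOf hC (mem_union_left _ (hv ▸ mem_singleton_self v))
  · obtain ⟨w, hw, hwΨ⟩ := hbody C hC
    exact absurd (hneg hw) hwΨ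

lemma notMem_pos_of_notMem_varsOf (hhead : ∀ C ∈ E, C.pos ⊆ varsOf Ψ) {w : V}
    (hw : w ∉ varsOf Ψ) : ∀ C ∈ Ψ ∪ E, w ∉ C.pos := by
  intro C hC hwC
  rcases mem_union.1 hC with hC | hC
  · exact hw (mem_varsOf hC (mem_union_left _ hwC))
  · exact hw (hhead C hC hwC)

lemma pos_subset_varsOf_of_mem_implSet (hhead : ∀ C ∈ E, C.pos ⊆ varsOf Ψ) {C : Clause V}
    (hC : C ∈ implSet (evalCNF (Ψ ∪ E))) : C.pos ⊆ varsOf Ψ :=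
  coe_subset.1 <| pos_subset_of_mem_implSet
    (fun _ hw _ => evalCNF_update_false (notMem_pos_of_notMem_varsOf hhead hw)) hC

lemma evalCNF_union_zeroOutside_iff (hbody : ∀ C ∈ E, ∃ w ∈ C.neg, w ∉ varsOf Ψ)
    (a : V → Bool) : evalCNF (Ψ ∪ E) (zeroOutside (varsOf Ψ) a) ↔ evalCNF Ψ a := by
  have hΨ : evalCNF Ψ (zeroOutside (varsOf Ψ) a) ↔ evalCNF Ψ a :=
    evalCNF_congr Ψ fun w hw => if_pos hw
  have hE : evalCNF E (zeroOutside (varsOf Ψ) a) := fun C hC => by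
    obtain ⟨w, hw, hwΨ⟩ := hbody C hC
    exact Or.inr ⟨w, hw, if_neg hwΨ⟩
  simp only [evalCNF, mem_union, or_imp, forall_and] at hΨ hE ⊢
  exact ⟨fun h => hΨ.1 h.1, fun h => ⟨hΨ.2 h, hE⟩⟩

lemma evalSet_inter_vars_subset_iff (hhead : ∀ C ∈ E, C.pos ⊆ varsOf Ψ)
    (hbody : ∀ C ∈ E, ∃ w ∈ C.neg, w ∉ varsOf Ψ) {𝒞 : Set (Clause V)}
    (h𝒞 : 𝒞 ⊆ implSet (evalCNF (Ψ ∪ E))) (hrep : ∀ a, evalSet 𝒞 a ↔ evalCNF (Ψ ∪ E) a)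
    (a : V → Bool) :
    evalSet (𝒞 ∩ {C | ↑(C.pos ∪ C.neg) ⊆ (↑(varsOf Ψ) : Set V)}) a ↔ evalCNF Ψ a := by
  have hzero := (hrep _).trans (evalCNF_union_zeroOutside_iff hbody a)
  constructor
  · refine fun h => hzero.1 fun C hC => ?_
    by_cases hsub : C.pos ∪ C.neg ⊆ varsOf Ψ
    · exact (C.eval_zeroOutside_iff hsub a).2 (h C ⟨hC, coe_subset.2 hsub⟩)
    · exact C.eval_zeroOutside_of_not_subset
        (pos_subset_varsOf_of_mem_implSet hhead (h𝒞 hC)) hsub a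
  · rintro h C ⟨hC, hsub⟩
    exact (C.eval_zeroOutside_iff (coe_subset.1 hsub) a).1 (hzero.2 h C hC)

end UnionCNF

section Canonical

variable {X Y A B : Type*} [Fintype X] [Fintype Y] [Fintype A] [Fintype B]
  [DecidableEq X] [DecidableEq Y] [DecidableEq A] [DecidableEq B]

lemma PV.v_notMem_varsOf_PsiCNF (I : LabelCover X Y A B) (d j : ℕ) :
    PV.v j ∉ varsOf (PsiCNF I d) := by
  simp only [varsOf, PsiCNF, clA, clB, clC, clD, bigBody, mem_biUnion, mem_union, mem_image]
  rintro ⟨C, ((⟨p, -, ab, -, rfl⟩ | ⟨p, -, rfl⟩) | ⟨p, -, rfl⟩) | ⟨ℓ, -, rfl⟩, hw⟩ <;>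
    simp_all

lemma PV.u_mem_varsOf_PsiCNF (I : LabelCover X Y A B) (d : ℕ) (ℓ : Lab X Y A B) :
    PV.u ℓ ∈ varsOf (PsiCNF I d) := by
  have hD : (⟨{PV.u ℓ}, bigBody I d⟩ : Clause (PV X Y A B)) ∈ PsiCNF I d :=
    mem_union_right _ (mem_image_of_mem _ (mem_univ ℓ))
  exact mem_varsOf hD (mem_union_left _ (mem_singleton_self _))

lemma clE_pos_subset_varsOf_PsiCNF (I : LabelCover X Y A B) (d t : ℕ) :
    ∀ C ∈ clE X Y A B t, C.pos ⊆ varsOf (PsiCNF I d) := by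
  simp only [clE, mem_image]
  rintro _ ⟨p, -, rfl⟩
  exact singleton_subset_iff.2 (PV.u_mem_varsOf_PsiCNF I d p.2)

lemma clE_exists_neg_notMem_varsOf_PsiCNF (I : LabelCover X Y A B) (d t : ℕ) :
    ∀ C ∈ clE X Y A B t, ∃ w ∈ C.neg, w ∉ varsOf (PsiCNF I d) := by
  simp only [clE, mem_image]
  rintro _ ⟨p, -, rfl⟩
  exact ⟨PV.v p.1, mem_singleton_self _, PV.v_notMem_varsOf_PsiCNF I d p.1⟩

end Canonical

theorem g_is_exclusive_component_general
    {X Y A B : Type*} [Fintype X] [Fintype Y] [Fintype A] [Fintype B]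
    [DecidableEq X] [DecidableEq Y] [DecidableEq A] [DecidableEq B]
    (I : LabelCover X Y A B) (d t : ℕ) :
    fcClosure (PhiCNF I d t) ↑(varsOf (PsiCNF I d)) = ↑(varsOf (PsiCNF I d)) ∧
    ExclusiveSet (hFun I d t)
      {C ∈ implSet (hFun I d t) |
        ↑(C.pos ∪ C.neg) ⊆ (↑(varsOf (PsiCNF I d)) : Set (PV X Y A B))} ∧
    ∀ 𝒞 : Set (Clause (PV X Y A B)), 𝒞 ⊆ implSet (hFun I d t) →
      (∀ a, evalSet 𝒞 a ↔ hFun I d t a) →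
      ∀ a, evalSet (𝒞 ∩ {C | ↑(C.pos ∪ C.neg) ⊆
        (↑(varsOf (PsiCNF I d)) : Set (PV X Y A B))}) a ↔ gFun I d a := by
  have hhead := clE_pos_subset_varsOf_PsiCNF I d t
  have hbody := clE_exists_neg_notMem_varsOf_PsiCNF I d t
  exact ⟨fcClosure_union_varsOf hbody,
    exclusiveSet_of_pos_subset fun _ hC => coe_subset.2 (pos_subset_varsOf_of_mem_implSet hhead hC),
    fun _ h𝒞 hrep => evalSet_inter_vars_subset_iff hhead hbody h𝒞 hrep⟩

/-- In the canonical construction, the variable set `V_g` of `Ψ` is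
closed under forward chaining in `Φ`, the set `X(V_g) = {C ∈ I(h) : Vars(C) ⊆ V_g}`
is an exclusive set of clauses of `h`, and `g` is the `X(V_g)`-component of `h`:
for every set of clauses `𝒞 ⊆ I(h)` representing `h`, the set `𝒞 ∩ X(V_g)`
represents `g`. -/
theorem g_is_exclusive_component
    {X Y A B : Type*} [Fintype X] [Fintype Y] [Fintype A] [Fintype B]
    [DecidableEq X] [DecidableEq Y] [DecidableEq A] [DecidableEq B]
    [Nonempty X] [Nonempty Y]
    (I : LabelCover X Y A B) (d t : ℕ) (hd : 1 ≤ d) (ht : 1 ≤ t)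
    (hnoIsoX : ∀ x : X, ∃ y, (x, y) ∈ I.E)
    (hnoIsoY : ∀ y : Y, ∃ x, (x, y) ∈ I.E) :
    fcClosure (PhiCNF I d t) ↑(varsOf (PsiCNF I d)) = ↑(varsOf (PsiCNF I d)) ∧
    ExclusiveSet (hFun I d t)
      {C ∈ implSet (hFun I d t) |
        ↑(C.pos ∪ C.neg) ⊆ (↑(varsOf (PsiCNF I d)) : Set (PV X Y A B))} ∧
    ∀ 𝒞 : Set (Clause (PV X Y A B)), 𝒞 ⊆ implSet (hFun I d t) →
      (∀ a, evalSet 𝒞 a ↔ hFun I d t a) →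
      ∀ a, evalSet (𝒞 ∩ {C | ↑(C.pos ∪ C.neg) ⊆
        (↑(varsOf (PsiCNF I d)) : Set (PV X Y A B))}) a ↔ gFun I d a :=
  g_is_exclusive_component_general I d t
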